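/- Under the assumptions in the context, there exists M0 > 0 such that for every real M ≥ M0, S(Q'(M)) = {(x1, x2, 0) : (x1, x2) ∈ S(Q)}; in particular, every optimal solution (x1, x2, e) of (Q'(M)) has e = 0. -/

import Mathlib

noncomputable section

/-- The lower-level feasible set of `(Q)` given `x2`. -/
def QLL (m1 n1 n2 : ℕ) (A11 : Matrix (Fin m1) (Fin n1) ℚ)
    (A12 : Matrix (Fin m1) (Fin n2) ℚ) (b1 : Fin m1 → ℚ) (x2 : Fin n2 → ℝ) :
    Set (Fin n1 → ℝ) :=
  {x1 | ∀ j, (b1 j : ℝ) ≤ ∑ k, (A11 j k : ℝ) * x1 k + ∑ k, (A12 j k : ℝ) * x2 k}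

/-- The (bilevel) feasible set of `(Q)`. -/
def FQ (m1 m2 m2' n1 n2 : ℕ)
    (A11 : Matrix (Fin m1) (Fin n1) ℚ) (A12 : Matrix (Fin m1) (Fin n2) ℚ)
    (A21 : Matrix (Fin m2) (Fin n1) ℚ) (A22 : Matrix (Fin m2) (Fin n2) ℚ)
    (Ab21 : Matrix (Fin m2') (Fin n1) ℚ) (Ab22 : Matrix (Fin m2') (Fin n2) ℚ)
    (b1 : Fin m1 → ℚ) (b2 : Fin m2 → ℚ) (bb2 : Fin m2' → ℚ) (c11 : Fin n1 → ℚ) :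
    Set ((Fin n1 → ℝ) × (Fin n2 → ℝ)) :=
  {x | (∀ j, (b2 j : ℝ) ≤ ∑ k, (A21 j k : ℝ) * x.1 k + ∑ k, (A22 j k : ℝ) * x.2 k) ∧
       (∀ j, (bb2 j : ℝ) ≤ ∑ k, (Ab21 j k : ℝ) * x.1 k + ∑ k, (Ab22 j k : ℝ) * x.2 k) ∧
       x.1 ∈ QLL m1 n1 n2 A11 A12 b1 x.2 ∧
       ∀ y ∈ QLL m1 n1 n2 A11 A12 b1 x.2,
         ∑ k, (c11 k : ℝ) * x.1 k ≤ ∑ k, (c11 k : ℝ) * y k}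

/-- The objective of `(Q)`. -/
def objQ (n1 n2 : ℕ) (c21 : Fin n1 → ℚ) (c22 : Fin n2 → ℚ)
    (x : (Fin n1 → ℝ) × (Fin n2 → ℝ)) : ℝ :=
  ∑ k, (c21 k : ℝ) * x.1 k + ∑ k, (c22 k : ℝ) * x.2 k

/-- The lower-level feasible set of `(Q'(M))` given `x2`: pairs `(x1', e')` with
`0 ≤ e' ≤ ē` (where `ē = 1` or `ē = +∞`). -/
def QLL' (m1 m2' n1 n2 : ℕ) (A11 : Matrix (Fin m1) (Fin n1) ℚ)
    (A12 : Matrix (Fin m1) (Fin n2) ℚ)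
    (Ab21 : Matrix (Fin m2') (Fin n1) ℚ) (Ab22 : Matrix (Fin m2') (Fin n2) ℚ)
    (b1 : Fin m1 → ℚ) (bb2 : Fin m2' → ℚ) (ebar : WithTop ℝ) (x2 : Fin n2 → ℝ) :
    Set ((Fin n1 → ℝ) × ℝ) :=
  {w | (∀ j, (b1 j : ℝ) ≤ ∑ k, (A11 j k : ℝ) * w.1 k + ∑ k, (A12 j k : ℝ) * x2 k) ∧
       (∀ j, (bb2 j : ℝ) ≤
         ∑ k, (Ab21 j k : ℝ) * w.1 k + ∑ k, (Ab22 j k : ℝ) * x2 k + w.2) ∧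
       0 ≤ w.2 ∧ (w.2 : WithTop ℝ) ≤ ebar}

/-- The (bilevel) feasible set of `(Q'(M))` (independent of `M`). -/
def FQ' (m1 m2 m2' n1 n2 : ℕ)
    (A11 : Matrix (Fin m1) (Fin n1) ℚ) (A12 : Matrix (Fin m1) (Fin n2) ℚ)
    (A21 : Matrix (Fin m2) (Fin n1) ℚ) (A22 : Matrix (Fin m2) (Fin n2) ℚ)
    (Ab21 : Matrix (Fin m2') (Fin n1) ℚ) (Ab22 : Matrix (Fin m2') (Fin n2) ℚ)
    (b1 : Fin m1 → ℚ) (b2 : Fin m2 → ℚ) (bb2 : Fin m2' → ℚ) (c11 : Fin n1 → ℚ)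
    (ebar : WithTop ℝ) :
    Set ((Fin n1 → ℝ) × (Fin n2 → ℝ) × ℝ) :=
  {x | (∀ j, (b2 j : ℝ) ≤ ∑ k, (A21 j k : ℝ) * x.1 k + ∑ k, (A22 j k : ℝ) * x.2.1 k) ∧
       (x.1, x.2.2) ∈ QLL' m1 m2' n1 n2 A11 A12 Ab21 Ab22 b1 bb2 ebar x.2.1 ∧
       ∀ w ∈ QLL' m1 m2' n1 n2 A11 A12 Ab21 Ab22 b1 bb2 ebar x.2.1,
         ∑ k, (c11 k : ℝ) * x.1 k ≤ ∑ k, (c11 k : ℝ) * w.1 k}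

/-- The objective of `(Q'(M))`. -/
def objQ' (n1 n2 : ℕ) (c21 : Fin n1 → ℚ) (c22 : Fin n2 → ℚ) (M : ℝ)
    (x : (Fin n1 → ℝ) × (Fin n2 → ℝ) × ℝ) : ℝ :=
  ∑ k, (c21 k : ℝ) * x.1 k + ∑ k, (c22 k : ℝ) * x.2.1 k + M * x.2.2

set_option linter.unusedSectionVars false
set_option maxHeartbeats 1000000


namespace FMtool

variable {α β κ : Type} [Fintype α] [Fintype β] [Fintype κ]

/-- value of a rational coefficient row on a real point -/
def rVal (c : α → ℚ) (x : α → ℝ) : ℝ := ∑ i, (c i : ℝ) * x i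

/-- solution set of a list of rows `(coeffs, rhs)` meaning `coeffs · x ≥ rhs`. -/
def sols (S : List ((α → ℚ) × ℚ)) : Set (α → ℝ) :=
  {x | ∀ p ∈ S, (p.2 : ℝ) ≤ rVal p.1 x}

lemma rVal_add (c : α → ℚ) (x y : α → ℝ) : rVal c (x + y) = rVal c x + rVal c y := by
  simp [rVal, Pi.add_apply, mul_add, Finset.sum_add_distrib]

lemma rVal_smul (c : α → ℚ) (t : ℝ) (x : α → ℝ) : rVal c (t • x) = t * rVal c x := by
  simp only [rVal, Pi.smul_apply, smul_eq_mul, Finset.mul_sum]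
  apply Finset.sum_congr rfl; intro i _; ring

/-- extension of a point by a value at `none` -/
def ext (t : ℝ) (x : α → ℝ) : Option α → ℝ := fun o => o.elim t x

@[simp] lemma ext_none (t : ℝ) (x : α → ℝ) : ext t x none = t := rfl
@[simp] lemma ext_some (t : ℝ) (x : α → ℝ) (a : α) : ext t x (some a) = x a := rfl

lemma rVal_ext (c : Option α → ℚ) (t : ℝ) (x : α → ℝ) :
    rVal c (ext t x) = (c none : ℝ) * t + rVal (fun a => c (some a)) x := by
  simp [rVal, Fintype.sum_option]

lemma exists_sep (L U : List ℝ) (h : ∀ l ∈ L, ∀ u ∈ U, l ≤ u) :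
    ∃ t : ℝ, (∀ l ∈ L, l ≤ t) ∧ (∀ u ∈ U, t ≤ u) := by
  classical
  rcases L.eq_nil_or_concat with rfl | hLne
  · rcases U.eq_nil_or_concat with rfl | hUne
    · exact ⟨0, by simp, by simp⟩
    · have hUne' : U.toFinset.Nonempty := by
        obtain ⟨l, b, rfl⟩ := hUne; exact ⟨b, by simp⟩
      refine ⟨U.toFinset.min' hUne', by simp, ?_⟩
      intro u hu
      exact Finset.min'_le _ _ (by simpa using hu)
  · have hLne' : L.toFinset.Nonempty := by
      obtain ⟨l, b, rfl⟩ := hLne; exact ⟨b, by simp⟩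
    refine ⟨L.toFinset.max' hLne', ?_, ?_⟩
    · intro l hl; exact Finset.le_max' _ _ (by simpa using hl)
    · intro u hu
      apply Finset.max'_le
      intro l hl
      exact h l (by simpa using hl) u hu

/-- one step of Fourier–Motzkin elimination (eliminating the `none` variable) -/
def elim1 (S : List ((Option α → ℚ) × ℚ)) : List ((α → ℚ) × ℚ) :=
  (S.filter (fun p => p.1 none = 0)).map (fun p => (fun a => p.1 (some a), p.2)) ++
  (S.product S).filterMap (fun pq =>
    if 0 < pq.1.1 none ∧ pq.2.1 none < 0 then
      some ((fun a => pq.1.1 (some a) / pq.1.1 none - pq.2.1 (some a) / pq.2.1 none),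
            pq.1.2 / pq.1.1 none - pq.2.2 / pq.2.1 none)
    else none)

lemma rVal_sub_div (c d : Option α → ℚ) (x : α → ℝ) :
    rVal (fun a => c (some a) / c none - d (some a) / d none) x =
      rVal (fun a => c (some a)) x / (c none : ℝ) -
      rVal (fun a => d (some a)) x / (d none : ℝ) := by
  simp only [rVal, div_eq_mul_inv, Finset.sum_div, ← Finset.sum_sub_distrib,
    Finset.sum_mul]
  apply Finset.sum_congr rfl
  intro i _
  push_cast
  ring

theorem mem_elim1 (S : List ((Option α → ℚ) × ℚ)) (x : α → ℝ) :
    x ∈ sols (elim1 S) ↔ ∃ t : ℝ, ext t x ∈ sols S := by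
  classical
  constructor
  · intro hx
    set L : List ℝ := S.filterMap (fun p =>
      if 0 < p.1 none then some (((p.2 : ℝ) - rVal (fun a => p.1 (some a)) x) / (p.1 none : ℝ))
      else none) with hL
    set U : List ℝ := S.filterMap (fun p =>
      if p.1 none < 0 then some (((p.2 : ℝ) - rVal (fun a => p.1 (some a)) x) / (p.1 none : ℝ))
      else none) with hU
    have hLU : ∀ l ∈ L, ∀ u ∈ U, l ≤ u := by
      intro l hl u hu
      rw [hL, List.mem_filterMap] at hl
      rw [hU, List.mem_filterMap] at hu
      obtain ⟨p, hp, hpl⟩ := hl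
      obtain ⟨q, hq, hqu⟩ := hu
      simp only [Option.ite_none_right_eq_some, Option.some_inj] at hpl hqu
      obtain ⟨hppos, hpl⟩ := hpl
      obtain ⟨hqneg, hqu⟩ := hqu
      have hmem : ((fun a => p.1 (some a) / p.1 none - q.1 (some a) / q.1 none),
            p.2 / p.1 none - q.2 / q.1 none) ∈ elim1 S := by
        unfold elim1
        refine List.mem_append_right _ ?_
        rw [List.mem_filterMap]
        exact ⟨(p, q), List.pair_mem_product.2 ⟨hp, hq⟩, by rw [if_pos ⟨hppos, hqneg⟩]⟩
      have hrow := hx _ hmem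
      rw [rVal_sub_div] at hrow
      push_cast at hrow
      rw [← hpl, ← hqu, sub_div, sub_div]
      linarith
    obtain ⟨t, htL, htU⟩ := exists_sep L U hLU
    refine ⟨t, ?_⟩
    intro p hp
    rw [rVal_ext]
    rcases lt_trichotomy (p.1 none) 0 with hneg | hzero | hpos
    · have hu : ((p.2 : ℝ) - rVal (fun a => p.1 (some a)) x) / (p.1 none : ℝ) ∈ U := by
        rw [hU, List.mem_filterMap]
        exact ⟨p, hp, by rw [if_pos hneg]⟩
      have := htU _ hu
      have hc : ((p.1 none : ℝ)) < 0 := by exact_mod_cast hneg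
      rw [le_div_iff_of_neg hc] at this
      linarith
    · have hmem : ((fun a => p.1 (some a)), p.2) ∈ elim1 S := by
        unfold elim1
        refine List.mem_append_left _ ?_
        rw [List.mem_map]
        exact ⟨p, by rw [List.mem_filter]; exact ⟨hp, by simp [hzero]⟩, rfl⟩
      have := hx _ hmem
      rw [hzero]
      push_cast
      linarith
    · have hl : ((p.2 : ℝ) - rVal (fun a => p.1 (some a)) x) / (p.1 none : ℝ) ∈ L := by
        rw [hL, List.mem_filterMap]
        exact ⟨p, hp, by rw [if_pos hpos]⟩
      have := htL _ hl
      have hc : (0:ℝ) < ((p.1 none : ℝ)) := by exact_mod_cast hpos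
      rw [div_le_iff₀ hc] at this
      linarith
  · rintro ⟨t, ht⟩
    intro r hr
    unfold elim1 at hr
    rw [List.mem_append] at hr
    rcases hr with hr | hr
    · rw [List.mem_map] at hr
      obtain ⟨p, hp, rfl⟩ := hr
      rw [List.mem_filter] at hp
      obtain ⟨hp, hz⟩ := hp
      have hz' : p.1 none = 0 := by simpa using hz
      have := ht p hp
      rw [rVal_ext, hz'] at this
      simpa using this
    · rw [List.mem_filterMap] at hr
      obtain ⟨⟨p, q⟩, hpq, hval⟩ := hr
      rw [List.pair_mem_product] at hpq
      simp only [Option.ite_none_right_eq_some, Option.some_inj] at hval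
      obtain ⟨⟨hppos, hqneg⟩, hval⟩ := hval
      subst hval
      have h1 := ht p hpq.1
      have h2 := ht q hpq.2
      rw [rVal_ext] at h1 h2
      rw [rVal_sub_div]
      have hcp : (0:ℝ) < ((p.1 none : ℝ)) := by exact_mod_cast hppos
      have hcq : ((q.1 none : ℝ)) < 0 := by exact_mod_cast hqneg
      push_cast

      -- from h1 : p.2 ≤ pn * t + restp  and h2 : q.2 ≤ qn * t + restq
      have e1 : (p.2 : ℝ) / (p.1 none : ℝ) ≤ t + rVal (fun a => p.1 (some a)) x / (p.1 none : ℝ) := by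
        rw [div_le_iff₀ hcp]
        calc (p.2:ℝ) ≤ (p.1 none : ℝ) * t + rVal (fun a => p.1 (some a)) x := h1
        _ = (t + rVal (fun a => p.1 (some a)) x / (p.1 none:ℝ)) * (p.1 none:ℝ) := by
            rw [add_mul, div_mul_cancel₀ _ hcp.ne']
            ring
      have e2 : t + rVal (fun a => q.1 (some a)) x / (q.1 none : ℝ) ≤ (q.2 : ℝ) / (q.1 none : ℝ) := by
        rw [le_div_iff_of_neg hcq]
        have heq : (t + rVal (fun a => q.1 (some a)) x / (q.1 none:ℝ)) * (q.1 none:ℝ)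
            = (q.1 none : ℝ) * t + rVal (fun a => q.1 (some a)) x := by
          rw [add_mul, div_mul_cancel₀ _ hcq.ne]
          ring
        rw [heq]
        exact h2
      linarith

lemma rVal_reindex (e : β ≃ α) (c : α → ℚ) (y : β → ℝ) :
    rVal (c ∘ e) y = rVal c (y ∘ e.symm) := by
  unfold rVal
  apply Fintype.sum_equiv e
  intro b
  simp

lemma sols_reindex (e : β ≃ α) (S : List ((α → ℚ) × ℚ)) (y : β → ℝ) :
    y ∈ sols (S.map (fun p => (p.1 ∘ e, p.2))) ↔ (y ∘ e.symm) ∈ sols S := by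
  constructor
  · intro h p hp
    have := h (p.1 ∘ e, p.2) (List.mem_map.2 ⟨p, hp, rfl⟩)
    rwa [rVal_reindex] at this
  · intro h r hr
    rw [List.mem_map] at hr
    obtain ⟨p, hp, rfl⟩ := hr
    rw [rVal_reindex]
    exact h p hp

/-- `κ ⊕ Fin (k+1) ≃ Option (κ ⊕ Fin k)` sending the `0`-th extra variable to `none`. -/
def sumFinSuccEquiv (κ : Type) (k : ℕ) : (κ ⊕ Fin (k+1)) ≃ Option (κ ⊕ Fin k) where
  toFun := Sum.elim (fun a => some (Sum.inl a))
    (fun i => Fin.cases none (fun j => some (Sum.inr j)) i)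
  invFun := fun o => o.elim (Sum.inr 0) (Sum.elim Sum.inl (fun j => Sum.inr j.succ))
  left_inv := by
    rintro (a | i)
    · rfl
    · induction i using Fin.cases with
      | zero => rfl
      | succ j => rfl
  right_inv := by rintro (_ | (a | j)) <;> rfl

theorem projFin (k : ℕ) (S : List (((κ ⊕ Fin k) → ℚ) × ℚ)) :
    ∃ S' : List ((κ → ℚ) × ℚ), ∀ x : κ → ℝ,
      x ∈ sols S' ↔ ∃ y : Fin k → ℝ, Sum.elim x y ∈ sols S := by
  induction k with
  | zero =>
    refine ⟨S.map (fun p => (p.1 ∘ Sum.inl, p.2)), fun x => ?_⟩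
    have key : ∀ (p : ((κ ⊕ Fin 0) → ℚ) × ℚ) (y : Fin 0 → ℝ),
        rVal (p.1 ∘ Sum.inl) x = rVal p.1 (Sum.elim x y) := by
      intro p y
      unfold rVal
      rw [Fintype.sum_sum_type]
      simp
    constructor
    · intro h
      refine ⟨finZeroElim, fun p hp => ?_⟩
      rw [← key p finZeroElim]
      exact h (p.1 ∘ Sum.inl, p.2) (List.mem_map.2 ⟨p, hp, rfl⟩)
    · rintro ⟨y, hy⟩ r hr
      rw [List.mem_map] at hr
      obtain ⟨p, hp, rfl⟩ := hr
      rw [key p y]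
      exact hy p hp
  | succ k ih =>
    set e := sumFinSuccEquiv κ k
    set Sm := S.map (fun p => (p.1 ∘ e.symm, p.2)) with hSm
    obtain ⟨S', hS'⟩ := ih (elim1 Sm)
    refine ⟨S', fun x => ?_⟩
    rw [hS']
    have hmem : ∀ (w : Option (κ ⊕ Fin k) → ℝ), w ∈ sols Sm ↔ (w ∘ e) ∈ sols S := by
      intro w
      have := sols_reindex (e.symm) S w
      simpa using this
    constructor
    · rintro ⟨y, hy⟩
      rw [mem_elim1] at hy
      obtain ⟨t, ht⟩ := hy
      rw [hmem] at ht
      refine ⟨Fin.cons t y, ?_⟩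
      convert ht using 1
      funext z
      rcases z with a | i
      · rfl
      · induction i using Fin.cases with
        | zero => simp [e, sumFinSuccEquiv, ext]
        | succ j => simp [e, sumFinSuccEquiv, ext]
    · rintro ⟨y', hy'⟩
      refine ⟨Fin.tail y', ?_⟩
      rw [mem_elim1]
      refine ⟨y' 0, ?_⟩
      rw [hmem]
      convert hy' using 1
      funext z
      rcases z with a | i
      · rfl
      · induction i using Fin.cases with
        | zero => simp [e, sumFinSuccEquiv, ext]
        | succ j => simp [e, sumFinSuccEquiv, ext, Fin.tail]

theorem projGen (β : Type) [Fintype β] (S : List (((κ ⊕ β) → ℚ) × ℚ)) :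
    ∃ S' : List ((κ → ℚ) × ℚ), ∀ x : κ → ℝ,
      x ∈ sols S' ↔ ∃ y : β → ℝ, Sum.elim x y ∈ sols S := by
  classical
  set e := Fintype.equivFin β
  set f : (κ ⊕ Fin (Fintype.card β)) ≃ (κ ⊕ β) := Equiv.sumCongr (Equiv.refl κ) e.symm with hf
  obtain ⟨S', hS'⟩ := projFin (Fintype.card β) (S.map (fun p => (p.1 ∘ f, p.2)))
  refine ⟨S', fun x => ?_⟩
  rw [hS']
  constructor
  · rintro ⟨y, hy⟩
    rw [sols_reindex f S] at hy
    refine ⟨y ∘ e, ?_⟩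
    convert hy using 1
    funext z
    rcases z with a | b <;> simp [f]
  · rintro ⟨y, hy⟩
    refine ⟨y ∘ e.symm, ?_⟩
    rw [sols_reindex f S]
    convert hy using 1
    funext z
    rcases z with a | b <;> simp [f]

-- ===== 2D part =====
abbrev V2 := (Unit ⊕ Unit) → ℚ

def obj2 (M : ℝ) (z : (Unit ⊕ Unit) → ℝ) : ℝ := z (.inl ()) + M * z (.inr ())

def det2 (q r : V2) : ℚ := q (.inl ()) * r (.inr ()) - q (.inr ()) * r (.inl ())

def eCram (q r : V2 × ℚ) : ℚ :=
  (q.1 (.inl ()) * r.2 - r.1 (.inl ()) * q.2) / det2 q.1 r.1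

lemma rVal_two (c : V2) (z : (Unit ⊕ Unit) → ℝ) :
    rVal c z = (c (.inl ()) : ℝ) * z (.inl ()) + (c (.inr ()) : ℝ) * z (.inr ()) := by
  simp [rVal, Fintype.sum_sum_type]

lemma ev_list {A : Type} (L : List A) (P : A → ℝ → Prop) (f : Filter ℝ)
    (h : ∀ a ∈ L, ∀ᶠ δ in f, P a δ) : ∀ᶠ δ in f, ∀ a ∈ L, P a δ := by
  induction L with
  | nil => simp
  | cons a L ih =>
    have h1 := h a (List.mem_cons_self)
    have h2 := ih (fun b hb => h b (List.mem_cons_of_mem a hb))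
    filter_upwards [h1, h2] with δ ha hL b hb
    rcases List.mem_cons.1 hb with rfl | hb
    · exact ha
    · exact hL b hb

theorem twoD (rows2 : List (V2 × ℚ)) (M : ℝ)
    (good : ∀ q ∈ rows2, q.1 = 0 ∨ (q.1 (.inl ()) : ℝ) * M ≠ (q.1 (.inr ()) : ℝ))
    (z : (Unit ⊕ Unit) → ℝ) (hz : z ∈ sols rows2)
    (hmin : ∀ z' ∈ sols rows2, obj2 M z ≤ obj2 M z') :
    ∃ q ∈ rows2, ∃ r ∈ rows2, det2 q.1 r.1 ≠ 0 ∧ z (.inr ()) = ((eCram q r : ℚ) : ℝ) := by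
  classical
  by_cases hpair : ∃ q ∈ rows2, ∃ r ∈ rows2,
      rVal q.1 z = (q.2 : ℝ) ∧ rVal r.1 z = (r.2 : ℝ) ∧ det2 q.1 r.1 ≠ 0
  · obtain ⟨q, hq, r, hr, hqz, hrz, hdet⟩ := hpair
    refine ⟨q, hq, r, hr, hdet, ?_⟩
    rw [rVal_two] at hqz hrz
    have hdet' : ((det2 q.1 r.1 : ℚ) : ℝ) ≠ 0 := by exact_mod_cast hdet
    rw [eCram]
    push_cast
    rw [eq_div_iff hdet']
    unfold det2 at *
    push_cast at hdet' ⊢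
    linear_combination (q.1 (.inl ()) : ℝ) * hrz - (r.1 (.inl ()) : ℝ) * hqz
  · push_neg at hpair
    -- construct a strictly improving direction
    have key : ∃ d : (Unit ⊕ Unit) → ℝ,
        (∀ q ∈ rows2, rVal q.1 z = (q.2 : ℝ) → rVal q.1 d = 0) ∧
        d (.inl ()) + M * d (.inr ()) < 0 := by
      by_cases hact : ∃ q₀ ∈ rows2, rVal q₀.1 z = (q₀.2 : ℝ) ∧ q₀.1 ≠ 0
      · obtain ⟨q₀, hq₀, hq₀z, hq₀ne⟩ := hact
        set a0 : ℝ := (q₀.1 (.inl ()) : ℝ)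
        set b0 : ℝ := (q₀.1 (.inr ()) : ℝ)
        have hobj : -b0 + M * a0 ≠ 0 := by
          rcases good q₀ hq₀ with h | h
          · exact absurd h hq₀ne
          · intro hc
            apply h
            dsimp [a0, b0] at hc
            linarith
        set d₀ : (Unit ⊕ Unit) → ℝ := Sum.elim (fun _ => -b0) (fun _ => a0) with hd₀
        have hperp : ∀ q ∈ rows2, rVal q.1 z = (q.2 : ℝ) → rVal q.1 d₀ = 0 := by
          intro q hq hqz
          have hdet := hpair q hq q₀ hq₀ hqz hq₀z
          rw [rVal_two]
          simp only [hd₀, Sum.elim_inl, Sum.elim_inr]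
          have : ((det2 q.1 q₀.1 : ℚ) : ℝ) = 0 := by exact_mod_cast hdet
          unfold det2 at this
          push_cast at this
          dsimp [a0, b0]
          linarith
        rcases lt_or_gt_of_ne hobj with hlt | hgt
        · exact ⟨d₀, hperp, by simpa [hd₀] using hlt⟩
        · refine ⟨-d₀, fun q hq hqz => ?_, ?_⟩
          · have : rVal q.1 ((-1 : ℝ) • d₀) = (-1) * rVal q.1 d₀ := rVal_smul _ _ _
            rw [hperp q hq hqz] at this
            simpa using this
          · simp only [Pi.neg_apply, hd₀, Sum.elim_inl, Sum.elim_inr]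
            linarith
      · push_neg at hact
        refine ⟨Sum.elim (fun _ => (-1 : ℝ)) (fun _ => -M), fun q hq hqz => ?_, ?_⟩
        · have hq0 : q.1 = 0 := hact q hq hqz
          rw [rVal_two, hq0]
          simp
        · simp only [Sum.elim_inl, Sum.elim_inr]
          nlinarith [sq_nonneg M]
    obtain ⟨d, hd0, hdneg⟩ := key
    have hev : ∀ᶠ δ in nhdsWithin (0:ℝ) (Set.Ioi 0), (z + δ • d) ∈ sols rows2 := by
      have : ∀ q ∈ rows2, ∀ᶠ δ in nhdsWithin (0:ℝ) (Set.Ioi 0),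
          (q.2 : ℝ) ≤ rVal q.1 (z + δ • d) := by
        intro q hq
        have hval : ∀ δ : ℝ, rVal q.1 (z + δ • d) = rVal q.1 z + δ * rVal q.1 d := by
          intro δ
          rw [rVal_add, rVal_smul]
        by_cases hactq : rVal q.1 z = (q.2 : ℝ)
        · apply Filter.Eventually.filter_mono nhdsWithin_le_nhds
          apply Filter.Eventually.of_forall
          intro δ
          rw [hval, hactq, hd0 q hq hactq]
          simp
        · have hstrict : (q.2 : ℝ) < rVal q.1 z := lt_of_le_of_ne (hz q hq) (Ne.symm hactq)
          have hc : Continuous (fun δ : ℝ => rVal q.1 z + δ * rVal q.1 d) := by continuity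
          have h0 : (q.2 : ℝ) < rVal q.1 z + (0:ℝ) * rVal q.1 d := by simpa using hstrict
          have := (hc.tendsto 0).eventually (eventually_gt_nhds h0)
          apply Filter.Eventually.filter_mono nhdsWithin_le_nhds
          filter_upwards [this] with δ hδ
          rw [hval]
          exact le_of_lt hδ
      have := ev_list rows2 (fun q δ => (q.2 : ℝ) ≤ rVal q.1 (z + δ • d)) _ this
      filter_upwards [this] with δ hδ
      exact fun p hp => hδ p hp
    have hpos : ∀ᶠ δ in nhdsWithin (0:ℝ) (Set.Ioi 0), (0:ℝ) < δ := by
      filter_upwards [self_mem_nhdsWithin] with δ hδ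
      exact hδ
    have : ∀ᶠ δ in nhdsWithin (0:ℝ) (Set.Ioi 0), False := by
      filter_upwards [hev, hpos] with δ hfeas hδ
      have hobj := hmin _ hfeas
      unfold obj2 at hobj
      simp only [Pi.add_apply, Pi.smul_apply, smul_eq_mul] at hobj
      nlinarith [mul_pos hδ (neg_pos.2 hdneg)]
    have hne : (nhdsWithin (0:ℝ) (Set.Ioi 0)).NeBot := nhdsGT_neBot 0
    exact absurd this (by simpa using Filter.eventually_false_iff_eq_bot.1 this ▸ hne.ne)

end FMtool


namespace BLP
open FMtool

variable {m1 m2 m2' n1 n2 : ℕ}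
  (A11 : Matrix (Fin m1) (Fin n1) ℚ) (A12 : Matrix (Fin m1) (Fin n2) ℚ)
  (A21 : Matrix (Fin m2) (Fin n1) ℚ) (A22 : Matrix (Fin m2) (Fin n2) ℚ)
  (Ab21 : Matrix (Fin m2') (Fin n1) ℚ) (Ab22 : Matrix (Fin m2') (Fin n2) ℚ)
  (b1 : Fin m1 → ℚ) (b2 : Fin m2 → ℚ) (bb2 : Fin m2' → ℚ)
  (c11 c21 : Fin n1 → ℚ) (c22 : Fin n2 → ℚ) (ub : Bool)

/-- real-level lower-level feasibility for `(Q'(M))` -/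
def LLfeas (x2 : Fin n2 → ℝ) (w1 : Fin n1 → ℝ) (e' : ℝ) : Prop :=
  (∀ j, (b1 j : ℝ) ≤ ∑ k, (A11 j k : ℝ) * w1 k + ∑ k, (A12 j k : ℝ) * x2 k) ∧
  (∀ j, (bb2 j : ℝ) ≤ ∑ k, (Ab21 j k : ℝ) * w1 k + ∑ k, (Ab22 j k : ℝ) * x2 k + e') ∧
  0 ≤ e' ∧ (ub = true → e' ≤ 1)

/-- upper-level constraints -/
def Upper (x1 : Fin n1 → ℝ) (x2 : Fin n2 → ℝ) : Prop :=
  ∀ j, (b2 j : ℝ) ≤ ∑ k, (A21 j k : ℝ) * x1 k + ∑ k, (A22 j k : ℝ) * x2 k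

/-- rows of the lower-level value system, variables `(x2, t) ⊕ (w1, e')` -/
def rowsD : List ((((Fin n2 ⊕ Unit) ⊕ (Fin n1 ⊕ Unit)) → ℚ) × ℚ) :=
  (List.ofFn fun j : Fin m1 =>
    (Sum.elim (Sum.elim (fun k => A12 j k) (0 : Unit → ℚ)) (Sum.elim (fun k => A11 j k) (0 : Unit → ℚ)), b1 j)) ++
  (List.ofFn fun j : Fin m2' =>
    (Sum.elim (Sum.elim (fun k => Ab22 j k) (0 : Unit → ℚ)) (Sum.elim (fun k => Ab21 j k) (fun _ => 1)), bb2 j)) ++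
  [(Sum.elim (0 : Fin n2 ⊕ Unit → ℚ) (Sum.elim (0 : Fin n1 → ℚ) (fun _ => 1)), 0)] ++
  (if ub then [(Sum.elim (0 : Fin n2 ⊕ Unit → ℚ) (Sum.elim (0 : Fin n1 → ℚ) (fun _ => -1)), -1)] else []) ++
  [(Sum.elim (Sum.elim (0 : Fin n2 → ℚ) (fun _ => 1)) (Sum.elim (fun k => -(c11 k)) (0 : Unit → ℚ)), 0)]

def ptD (x2 : Fin n2 → ℝ) (t : ℝ) : (Fin n2 ⊕ Unit) → ℝ := Sum.elim x2 (fun _ => t)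

lemma rVal_sumElim {a b : Type} [Fintype a] [Fintype b] (c1 : a → ℚ) (c2 : b → ℚ)
    (y1 : a → ℝ) (y2 : b → ℝ) :
    rVal (Sum.elim c1 c2) (Sum.elim y1 y2) = rVal c1 y1 + rVal c2 y2 := by
  simp [rVal, Fintype.sum_sum_type]

lemma rVal_unit (c : Unit → ℚ) (y : Unit → ℝ) : rVal c y = (c () : ℝ) * y () := by
  simp [rVal]

lemma rVal_zero {a : Type} [Fintype a] (y : a → ℝ) : rVal (0 : a → ℚ) y = 0 := by
  simp [rVal]

lemma rVal_split {a b : Type} [Fintype a] [Fintype b] (c : (a ⊕ b) → ℚ) (y : (a ⊕ b) → ℝ) :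
    rVal c y = rVal (fun i => c (Sum.inl i)) (fun i => y (Sum.inl i)) +
      rVal (fun i => c (Sum.inr i)) (fun i => y (Sum.inr i)) := by
  simp [rVal, Fintype.sum_sum_type]

lemma sum_eta {a : Type} (y : (a ⊕ Unit) → ℝ) :
    Sum.elim (fun i => y (Sum.inl i)) (fun _ => y (Sum.inr ())) = y := by
  funext z
  rcases z with i | ⟨⟩ <;> rfl

/-- semantics of `rowsD` -/
lemma mem_rowsD (x2 : Fin n2 → ℝ) (t : ℝ) (w1 : Fin n1 → ℝ) (e' : ℝ) :
    Sum.elim (ptD x2 t) (Sum.elim w1 (fun _ => e')) ∈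
      sols (rowsD A11 A12 Ab21 Ab22 b1 bb2 c11 ub) ↔
    (LLfeas A11 A12 Ab21 Ab22 b1 bb2 ub x2 w1 e' ∧ ∑ k, (c11 k : ℝ) * w1 k ≤ t) := by
  cases ub
  · unfold rowsD LLfeas ptD sols
    simp only [Set.mem_setOf_eq, List.forall_mem_append, List.forall_mem_ofFn_iff,
      List.forall_mem_singleton, if_neg (by simp : ¬(false = true)), List.not_mem_nil,
      IsEmpty.forall_iff, implies_true, and_true, true_and,
      rVal_sumElim, rVal_unit, rVal_zero, Sum.elim_inl, Sum.elim_inr]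
    constructor
    · rintro ⟨⟨⟨h1, h2⟩, h3⟩, h5⟩
      refine ⟨⟨?_, ?_, ?_, by simp⟩, ?_⟩
      · intro j; have := h1 j; unfold rVal at this; push_cast at this ⊢; linarith
      · intro j; have := h2 j; unfold rVal at this; push_cast at this ⊢; linarith
      · push_cast at h3; linarith
      · unfold rVal at h5; push_cast at h5
        have heq : ∑ x : Fin n1, -(c11 x : ℝ) * w1 x = -∑ k, (c11 k : ℝ) * w1 k := by
          rw [← Finset.sum_neg_distrib]
          exact Finset.sum_congr rfl fun k _ => by ring
        rw [heq] at h5; linarith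
    · rintro ⟨⟨h1, h2, h3, _⟩, h5⟩
      refine ⟨⟨⟨?_, ?_⟩, ?_⟩, ?_⟩
      · intro j; have := h1 j; unfold rVal; push_cast; linarith
      · intro j; have := h2 j; unfold rVal; push_cast; linarith
      · push_cast; linarith
      · unfold rVal; push_cast
        have heq : ∑ x : Fin n1, -(c11 x : ℝ) * w1 x = -∑ k, (c11 k : ℝ) * w1 k := by
          rw [← Finset.sum_neg_distrib]
          exact Finset.sum_congr rfl fun k _ => by ring
        rw [heq]; linarith
  · unfold rowsD LLfeas ptD sols
    simp only [Set.mem_setOf_eq, List.forall_mem_append, List.forall_mem_ofFn_iff,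
      List.forall_mem_singleton, reduceIte,
      rVal_sumElim, rVal_unit, rVal_zero, Sum.elim_inl, Sum.elim_inr]
    constructor
    · rintro ⟨⟨⟨⟨h1, h2⟩, h3⟩, h4⟩, h5⟩
      refine ⟨⟨?_, ?_, ?_, fun _ => ?_⟩, ?_⟩
      · intro j; have := h1 j; unfold rVal at this; push_cast at this ⊢; linarith
      · intro j; have := h2 j; unfold rVal at this; push_cast at this ⊢; linarith
      · push_cast at h3; linarith
      · push_cast at h4; linarith
      · unfold rVal at h5; push_cast at h5
        have heq : ∑ x : Fin n1, -(c11 x : ℝ) * w1 x = -∑ k, (c11 k : ℝ) * w1 k := by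
          rw [← Finset.sum_neg_distrib]
          exact Finset.sum_congr rfl fun k _ => by ring
        rw [heq] at h5; linarith
    · rintro ⟨⟨h1, h2, h3, h4⟩, h5⟩
      refine ⟨⟨⟨⟨?_, ?_⟩, ?_⟩, ?_⟩, ?_⟩
      · intro j; have := h1 j; unfold rVal; push_cast; linarith
      · intro j; have := h2 j; unfold rVal; push_cast; linarith
      · push_cast; linarith
      · push_cast; have := h4 trivial; linarith
      · unfold rVal; push_cast
        have heq : ∑ x : Fin n1, -(c11 x : ℝ) * w1 x = -∑ k, (c11 k : ℝ) * w1 k := by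
          rw [← Finset.sum_neg_distrib]
          exact Finset.sum_congr rfl fun k _ => by ring
        rw [heq]; linarith


lemma rVal_ptD (c : (Fin n2 ⊕ Unit) → ℚ) (x2 : Fin n2 → ℝ) (t : ℝ) :
    rVal c (ptD x2 t) = rVal (fun k => c (Sum.inl k)) x2 + (c (Sum.inr ()) : ℝ) * t := by
  rw [rVal_split]
  congr 1
  rw [rVal_unit]
  rfl

lemma opt_char (dR : List (((Fin n2 ⊕ Unit) → ℚ) × ℚ))
    (hdR : ∀ v : (Fin n2 ⊕ Unit) → ℝ, v ∈ sols dR ↔ ∃ y : (Fin n1 ⊕ Unit) → ℝ,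
      Sum.elim v y ∈ sols (rowsD A11 A12 Ab21 Ab22 b1 bb2 c11 ub))
    (x2 : Fin n2 → ℝ) (x1 : Fin n1 → ℝ) (e : ℝ)
    (hfeas : LLfeas A11 A12 Ab21 Ab22 b1 bb2 ub x2 x1 e) :
    (∀ (w1 : Fin n1 → ℝ) (e' : ℝ), LLfeas A11 A12 Ab21 Ab22 b1 bb2 ub x2 w1 e' →
        ∑ k, (c11 k : ℝ) * x1 k ≤ ∑ k, (c11 k : ℝ) * w1 k) ↔
    ∃ p ∈ dR, 0 < p.1 (Sum.inr ()) ∧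
      rVal p.1 (ptD x2 (∑ k, (c11 k : ℝ) * x1 k)) ≤ (p.2 : ℝ) := by
  classical
  set t0 := ∑ k, (c11 k : ℝ) * x1 k with ht0
  have hin : ∀ (w1 : Fin n1 → ℝ) (e' t : ℝ),
      LLfeas A11 A12 Ab21 Ab22 b1 bb2 ub x2 w1 e' → (∑ k, (c11 k : ℝ) * w1 k) ≤ t →
      ptD x2 t ∈ sols dR := by
    intro w1 e' t hf hle
    exact (hdR _).2 ⟨Sum.elim w1 (fun _ => e'),
      (mem_rowsD A11 A12 Ab21 Ab22 b1 bb2 c11 ub x2 t w1 e').2 ⟨hf, hle⟩⟩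
  constructor
  · intro hopt
    by_contra hc
    push_neg at hc
    have hc' : ∀ p ∈ dR, 0 < p.1 (Sum.inr ()) → (p.2 : ℝ) < rVal p.1 (ptD x2 t0) := by
      intro p hp hpT
      exact hc p hp hpT
    have h0 : ptD x2 t0 ∈ sols dR := hin x1 e t0 hfeas le_rfl
    have hev : ∀ p ∈ dR, ∀ᶠ δ in nhdsWithin (0:ℝ) (Set.Ioi 0),
        (p.2 : ℝ) ≤ rVal p.1 (ptD x2 (t0 - δ)) := by
      intro p hp
      have hval : ∀ δ : ℝ, rVal p.1 (ptD x2 (t0 - δ)) =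
          rVal (fun k => p.1 (Sum.inl k)) x2 + (p.1 (Sum.inr ()) : ℝ) * t0 -
            δ * (p.1 (Sum.inr ()) : ℝ) := by
        intro δ
        rw [rVal_ptD]
        ring
      rcases le_or_gt ((p.1 (Sum.inr ()) : ℝ)) 0 with hT | hT
      · filter_upwards [self_mem_nhdsWithin] with δ hδ
        rw [hval]
        have h00 := h0 p hp
        rw [rVal_ptD] at h00
        have : (0:ℝ) ≤ -(δ * (p.1 (Sum.inr ()) : ℝ)) := by
          rw [Set.mem_Ioi] at hδ
          nlinarith
        linarith
      · have hTQ : 0 < p.1 (Sum.inr ()) := by exact_mod_cast hT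
        have hstrict := hc' p hp hTQ
        rw [rVal_ptD] at hstrict
        have hcont : Continuous (fun δ : ℝ =>
            rVal (fun k => p.1 (Sum.inl k)) x2 + (p.1 (Sum.inr ()) : ℝ) * t0 -
              δ * (p.1 (Sum.inr ()) : ℝ)) := by continuity
        have h00 : (p.2 : ℝ) < rVal (fun k => p.1 (Sum.inl k)) x2 +
            (p.1 (Sum.inr ()) : ℝ) * t0 - (0:ℝ) * (p.1 (Sum.inr ()) : ℝ) := by
          simpa using hstrict
        have := (hcont.tendsto 0).eventually (eventually_gt_nhds h00)
        apply Filter.Eventually.filter_mono nhdsWithin_le_nhds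
        filter_upwards [this] with δ hδ
        rw [hval]
        linarith
    have hall := ev_list dR
      (fun p δ => (p.2 : ℝ) ≤ rVal p.1 (ptD x2 (t0 - δ))) _ hev
    have hpos : ∀ᶠ δ in nhdsWithin (0:ℝ) (Set.Ioi 0), (0:ℝ) < δ := by
      filter_upwards [self_mem_nhdsWithin] with δ hδ
      exact hδ
    haveI : (nhdsWithin (0:ℝ) (Set.Ioi 0)).NeBot := nhdsGT_neBot 0
    obtain ⟨δ, hfeasδ, hδpos⟩ := (hall.and hpos).exists
    have hmem : ptD x2 (t0 - δ) ∈ sols dR := fun p hp => hfeasδ p hp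
    obtain ⟨y, hy⟩ := (hdR _).1 hmem
    rw [← sum_eta y] at hy
    obtain ⟨hf, hle⟩ := (mem_rowsD A11 A12 Ab21 Ab22 b1 bb2 c11 ub x2 (t0 - δ)
      (fun i => y (Sum.inl i)) (y (Sum.inr ()))).1 hy
    have := hopt _ _ hf
    linarith
  · rintro ⟨p, hp, hpT, hineq⟩ w1 e' hw
    have hmem := hin w1 e' _ hw le_rfl
    have h2 := hmem p hp
    rw [rVal_ptD] at h2 hineq
    have hpT' : (0:ℝ) < (p.1 (Sum.inr ()) : ℝ) := by exact_mod_cast hpT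
    have hmul : (p.1 (Sum.inr ()) : ℝ) * t0 ≤
        (p.1 (Sum.inr ()) : ℝ) * ∑ k, (c11 k : ℝ) * w1 k := by linarith
    exact (mul_le_mul_iff_right₀ hpT').1 hmul


def ptC (s e : ℝ) : (Unit ⊕ Unit) → ℝ := Sum.elim (fun _ => s) (fun _ => e)

def rowsT (p : ((Fin n2 ⊕ Unit) → ℚ) × ℚ) :
    List ((((Unit ⊕ Unit) ⊕ (Fin n1 ⊕ Fin n2)) → ℚ) × ℚ) :=
  (List.ofFn fun j : Fin m2 =>
    (Sum.elim (0 : Unit ⊕ Unit → ℚ) (Sum.elim (fun k => A21 j k) (fun k => A22 j k)), b2 j)) ++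
  (List.ofFn fun j : Fin m1 =>
    (Sum.elim (0 : Unit ⊕ Unit → ℚ) (Sum.elim (fun k => A11 j k) (fun k => A12 j k)), b1 j)) ++
  (List.ofFn fun j : Fin m2' =>
    (Sum.elim (Sum.elim (0 : Unit → ℚ) (fun _ => 1))
      (Sum.elim (fun k => Ab21 j k) (fun k => Ab22 j k)), bb2 j)) ++
  [(Sum.elim (Sum.elim (0 : Unit → ℚ) (fun _ => 1)) (0 : Fin n1 ⊕ Fin n2 → ℚ), 0)] ++
  (if ub then
    [(Sum.elim (Sum.elim (0 : Unit → ℚ) (fun _ => -1)) (0 : Fin n1 ⊕ Fin n2 → ℚ), -1)]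
   else []) ++
  [(Sum.elim (0 : Unit ⊕ Unit → ℚ)
    (Sum.elim (fun k => -(p.1 (Sum.inr ()) * c11 k)) (fun k => -(p.1 (Sum.inl k)))), -p.2)] ++
  [(Sum.elim (Sum.elim (fun _ => 1) (0 : Unit → ℚ))
    (Sum.elim (fun k => -(c21 k)) (fun k => -(c22 k))), 0)]

lemma sum_neg_mul (c : Fin n1 → ℚ) (q : ℚ) (x : Fin n1 → ℝ) :
    ∑ k : Fin n1, ((-(q * c k) : ℚ) : ℝ) * x k = -((q : ℝ) * ∑ k, (c k : ℝ) * x k) := by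
  rw [Finset.mul_sum, ← Finset.sum_neg_distrib]
  apply Finset.sum_congr rfl
  intro k _
  push_cast
  ring

lemma sum_neg (c : Fin n2 → ℚ) (x : Fin n2 → ℝ) :
    ∑ k : Fin n2, ((-(c k) : ℚ) : ℝ) * x k = -(∑ k, (c k : ℝ) * x k) := by
  rw [← Finset.sum_neg_distrib]
  apply Finset.sum_congr rfl
  intro k _
  push_cast
  ring

lemma mem_rowsT (p : ((Fin n2 ⊕ Unit) → ℚ) × ℚ) (s e : ℝ)
    (x1 : Fin n1 → ℝ) (x2 : Fin n2 → ℝ) :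
    Sum.elim (ptC s e) (Sum.elim x1 x2) ∈
      sols (rowsT A11 A12 A21 A22 Ab21 Ab22 b1 b2 bb2 c11 c21 c22 ub p) ↔
    (Upper A21 A22 b2 x1 x2 ∧ LLfeas A11 A12 Ab21 Ab22 b1 bb2 ub x2 x1 e ∧
     rVal p.1 (ptD x2 (∑ k, (c11 k : ℝ) * x1 k)) ≤ (p.2 : ℝ) ∧
     ∑ k, (c21 k : ℝ) * x1 k + ∑ k, (c22 k : ℝ) * x2 k ≤ s) := by
  have hsum1 := sum_neg_mul (n1 := n1) c11 (p.1 (Sum.inr ())) x1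
  have hsum2 := sum_neg (n2 := n2) (fun k => p.1 (Sum.inl k)) x2
  have hsum3 := sum_neg_mul (n1 := n1) c21 1 x1
  have hsum4 := sum_neg (n2 := n2) c22 x2
  rw [rVal_ptD]
  cases ub
  · unfold rowsT LLfeas Upper sols ptC
    simp only [Set.mem_setOf_eq, List.forall_mem_append, List.forall_mem_ofFn_iff,
      List.forall_mem_singleton, if_neg (by simp : ¬(false = true)), List.not_mem_nil,
      IsEmpty.forall_iff, implies_true, and_true, true_and,
      rVal_sumElim, rVal_unit, rVal_zero, Sum.elim_inl, Sum.elim_inr]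
    unfold rVal
    beta_reduce
    constructor
    · rintro ⟨⟨⟨⟨⟨hU, hb1⟩, hbb⟩, he0⟩, hop⟩, hob⟩
      rw [hsum1, hsum2] at hop
      rw [hsum4] at hob
      refine ⟨fun j => by have := hU j; push_cast at this ⊢; linarith,
        ⟨fun j => by have := hb1 j; push_cast at this ⊢; linarith,
         fun j => by have := hbb j; push_cast at this ⊢; linarith,
         by push_cast at he0; linarith, by simp⟩, by push_cast at hop; linarith, ?_⟩
      push_cast at hob
      have heq : ∑ x : Fin n1, (-(c21 x : ℝ)) * x1 x = -∑ k, (c21 k : ℝ) * x1 k := by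
        rw [← Finset.sum_neg_distrib]
        exact Finset.sum_congr rfl fun k _ => by ring
      rw [heq] at hob
      linarith
    · rintro ⟨hU, ⟨hb1, hbb, he0, _⟩, hop, hob⟩
      refine ⟨⟨⟨⟨⟨fun j => by have := hU j; push_cast; linarith,
        fun j => by have := hb1 j; push_cast; linarith⟩,
        fun j => by have := hbb j; push_cast; linarith⟩,
        by push_cast; linarith⟩, ?_⟩, ?_⟩
      · rw [hsum1, hsum2]; push_cast at hop ⊢; linarith
      · rw [hsum4]
        have heq : ∑ x : Fin n1, (-(c21 x : ℝ)) * x1 x = -∑ k, (c21 k : ℝ) * x1 k := by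
          rw [← Finset.sum_neg_distrib]
          exact Finset.sum_congr rfl fun k _ => by ring
        push_cast
        rw [heq]
        linarith
  · unfold rowsT LLfeas Upper sols ptC
    simp only [Set.mem_setOf_eq, List.forall_mem_append, List.forall_mem_ofFn_iff,
      List.forall_mem_singleton, reduceIte,
      rVal_sumElim, rVal_unit, rVal_zero, Sum.elim_inl, Sum.elim_inr]
    unfold rVal
    beta_reduce
    constructor
    · rintro ⟨⟨⟨⟨⟨⟨hU, hb1⟩, hbb⟩, he0⟩, he1⟩, hop⟩, hob⟩
      rw [hsum1, hsum2] at hop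
      rw [hsum4] at hob
      refine ⟨fun j => by have := hU j; push_cast at this ⊢; linarith,
        ⟨fun j => by have := hb1 j; push_cast at this ⊢; linarith,
         fun j => by have := hbb j; push_cast at this ⊢; linarith,
         by push_cast at he0; linarith, fun _ => by push_cast at he1; linarith⟩,
        by push_cast at hop; linarith, ?_⟩
      push_cast at hob
      have heq : ∑ x : Fin n1, (-(c21 x : ℝ)) * x1 x = -∑ k, (c21 k : ℝ) * x1 k := by
        rw [← Finset.sum_neg_distrib]
        exact Finset.sum_congr rfl fun k _ => by ring
      rw [heq] at hob
      linarith
    · rintro ⟨hU, ⟨hb1, hbb, he0, he1⟩, hop, hob⟩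
      refine ⟨⟨⟨⟨⟨⟨fun j => by have := hU j; push_cast; linarith,
        fun j => by have := hb1 j; push_cast; linarith⟩,
        fun j => by have := hbb j; push_cast; linarith⟩,
        by push_cast; linarith⟩,
        by push_cast; have := he1 trivial; linarith⟩, ?_⟩, ?_⟩
      · rw [hsum1, hsum2]; push_cast at hop ⊢; linarith
      · rw [hsum4]
        have heq : ∑ x : Fin n1, (-(c21 x : ℝ)) * x1 x = -∑ k, (c21 k : ℝ) * x1 k := by
          rw [← Finset.sum_neg_distrib]
          exact Finset.sum_congr rfl fun k _ => by ring
        push_cast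
        rw [heq]
        linarith


lemma list_choice {A B : Type} (l : List A) (R : A → B → Prop) (h : ∀ a ∈ l, ∃ b, R a b) :
    ∃ l' : List B, (∀ b ∈ l', ∃ a ∈ l, R a b) ∧ (∀ a ∈ l, ∃ b ∈ l', R a b) := by
  induction l with
  | nil => exact ⟨[], by simp, by simp⟩
  | cons a l ih =>
    obtain ⟨b, hb⟩ := h a (List.mem_cons_self)
    obtain ⟨l', h1, h2⟩ := ih (fun a' ha' => h a' (List.mem_cons_of_mem _ ha'))
    refine ⟨b :: l', ?_, ?_⟩
    · intro b' hb'
      rcases List.mem_cons.1 hb' with rfl | hb'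
      · exact ⟨a, List.mem_cons_self, hb⟩
      · obtain ⟨a', ha', hR⟩ := h1 b' hb'
        exact ⟨a', List.mem_cons_of_mem _ ha', hR⟩
    · intro a' ha'
      rcases List.mem_cons.1 ha' with rfl | ha'
      · exact ⟨b, List.mem_cons_self, hb⟩
      · obtain ⟨b', hb', hR⟩ := h2 a' ha'
        exact ⟨b', List.mem_cons_of_mem _ hb', hR⟩

def allR {A : Type} (CL : List (List A)) : List A := CL.foldr (· ++ ·) []

lemma mem_allR {A : Type} {CL : List (List A)} {q : A} :
    q ∈ allR CL ↔ ∃ r2 ∈ CL, q ∈ r2 := by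
  induction CL with
  | nil => simp [allR]
  | cons r CL ih =>
    simp only [allR, List.foldr_cons, List.mem_append, List.mem_cons]
    rw [show (List.foldr (· ++ ·) [] CL) = allR CL from rfl, ih]
    constructor
    · rintro (h | ⟨r2, h1, h2⟩)
      · exact ⟨r, Or.inl rfl, h⟩
      · exact ⟨r2, Or.inr h1, h2⟩
    · rintro ⟨r2, (rfl | h1), h2⟩
      · exact Or.inl h2
      · exact Or.inr ⟨r2, h1, h2⟩

lemma foldr_min_pos (l : List ℚ) (h : ∀ a ∈ l, 0 < a) : 0 < l.foldr min 1 := by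
  induction l with
  | nil => exact one_pos
  | cons a l ih =>
    exact lt_min (h a (List.mem_cons_self))
      (ih (fun b hb => h b (List.mem_cons_of_mem _ hb)))

lemma foldr_min_le (l : List ℚ) {a : ℚ} (ha : a ∈ l) : l.foldr min 1 ≤ a := by
  induction l with
  | nil => simp at ha
  | cons b l ih =>
    rcases List.mem_cons.1 ha with rfl | ha
    · exact min_le_left _ _
    · exact le_trans (min_le_right _ _) (ih ha)

section Link
variable (ebar : WithTop ℝ)

lemma QLL'_iff (hconv : ∀ r : ℝ, ((r : WithTop ℝ) ≤ ebar ↔ (ub = true → r ≤ 1))) (x2 : Fin n2 → ℝ) (w : (Fin n1 → ℝ) × ℝ) :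
    w ∈ QLL' m1 m2' n1 n2 A11 A12 Ab21 Ab22 b1 bb2 ebar x2 ↔
    LLfeas A11 A12 Ab21 Ab22 b1 bb2 ub x2 w.1 w.2 := by
  unfold QLL' LLfeas
  simp only [Set.mem_setOf_eq]
  rw [hconv w.2]

lemma FQ'_iff (hconv : ∀ r : ℝ, ((r : WithTop ℝ) ≤ ebar ↔ (ub = true → r ≤ 1))) (x : (Fin n1 → ℝ) × (Fin n2 → ℝ) × ℝ) :
    x ∈ FQ' m1 m2 m2' n1 n2 A11 A12 A21 A22 Ab21 Ab22 b1 b2 bb2 c11 ebar ↔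
    (Upper A21 A22 b2 x.1 x.2.1 ∧ LLfeas A11 A12 Ab21 Ab22 b1 bb2 ub x.2.1 x.1 x.2.2 ∧
     ∀ (w1 : Fin n1 → ℝ) (e' : ℝ), LLfeas A11 A12 Ab21 Ab22 b1 bb2 ub x.2.1 w1 e' →
       ∑ k, (c11 k : ℝ) * x.1 k ≤ ∑ k, (c11 k : ℝ) * w1 k) := by
  unfold FQ' Upper
  simp only [Set.mem_setOf_eq]
  constructor
  · rintro ⟨h1, h2, h3⟩
    refine ⟨h1, (QLL'_iff A11 A12 Ab21 Ab22 b1 bb2 ub ebar hconv _ _).1 h2, ?_⟩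
    intro w1 e' hw
    exact h3 (w1, e') ((QLL'_iff A11 A12 Ab21 Ab22 b1 bb2 ub ebar hconv _ _).2 hw)
  · rintro ⟨h1, h2, h3⟩
    refine ⟨h1, (QLL'_iff A11 A12 Ab21 Ab22 b1 bb2 ub ebar hconv _ _).2 h2, ?_⟩
    intro w hw
    exact h3 w.1 w.2 ((QLL'_iff A11 A12 Ab21 Ab22 b1 bb2 ub ebar hconv _ _).1 hw)

lemma objQ'_eq (M : ℝ) (x : (Fin n1 → ℝ) × (Fin n2 → ℝ) × ℝ) :
    objQ' n1 n2 c21 c22 M x = objQ n1 n2 c21 c22 (x.1, x.2.1) + M * x.2.2 := rfl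

/-- forward inclusion: `FQ × {0} ⊆ FQ'` -/
lemma sec_fwd (hconv : ∀ r : ℝ, ((r : WithTop ℝ) ≤ ebar ↔ (ub = true → r ≤ 1))) (z : (Fin n1 → ℝ) × (Fin n2 → ℝ))
    (hz : z ∈ FQ m1 m2 m2' n1 n2 A11 A12 A21 A22 Ab21 Ab22 b1 b2 bb2 c11) :
    (z.1, z.2, (0:ℝ)) ∈ FQ' m1 m2 m2' n1 n2 A11 A12 A21 A22 Ab21 Ab22 b1 b2 bb2 c11 ebar := by
  obtain ⟨h1, h2, h3, h4⟩ := hz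
  rw [FQ'_iff A11 A12 A21 A22 Ab21 Ab22 b1 b2 bb2 c11 ub ebar hconv]
  refine ⟨h1, ⟨h3, fun j => by have := h2 j; simpa using this, le_refl 0, fun _ => by norm_num⟩, ?_⟩
  intro w1 e' hw
  exact h4 w1 hw.1

lemma sum_mix {n : ℕ} (a : Fin n → ℚ) (u v : Fin n → ℝ) (t : ℝ) :
    ∑ k, (a k : ℝ) * (u k + t * (v k - u k)) =
      (∑ k, (a k : ℝ) * u k) + t * ((∑ k, (a k : ℝ) * v k) - ∑ k, (a k : ℝ) * u k) := by
  have h : ∀ k ∈ Finset.univ (α := Fin n), (a k : ℝ) * (u k + t * (v k - u k)) =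
      (a k : ℝ) * u k + (t * ((a k : ℝ) * v k) - t * ((a k : ℝ) * u k)) :=
    fun k _ => by ring
  rw [Finset.sum_congr rfl h, Finset.sum_add_distrib, Finset.sum_sub_distrib,
    ← Finset.mul_sum, ← Finset.mul_sum]
  ring

/-- backward inclusion: points of `FQ'` with `e = 0` project into `FQ` -/
lemma sec_bwd (hconv : ∀ r : ℝ, ((r : WithTop ℝ) ≤ ebar ↔ (ub = true → r ≤ 1))) (x : (Fin n1 → ℝ) × (Fin n2 → ℝ) × ℝ)
    (hx : x ∈ FQ' m1 m2 m2' n1 n2 A11 A12 A21 A22 Ab21 Ab22 b1 b2 bb2 c11 ebar)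
    (he : x.2.2 = 0) :
    (x.1, x.2.1) ∈ FQ m1 m2 m2' n1 n2 A11 A12 A21 A22 Ab21 Ab22 b1 b2 bb2 c11 := by
  rw [FQ'_iff A11 A12 A21 A22 Ab21 Ab22 b1 b2 bb2 c11 ub ebar hconv] at hx
  obtain ⟨hU, hL, hopt⟩ := hx
  rw [he] at hL
  obtain ⟨hb1, hbb, -, -⟩ := hL
  refine ⟨hU, fun j => by have := hbb j; simpa using this, hb1, ?_⟩
  intro y hy
  set V : ℝ := ∑ j, max 0 ((bb2 j : ℝ) -
    (∑ k, (Ab21 j k : ℝ) * y k + ∑ k, (Ab22 j k : ℝ) * x.2.1 k)) with hV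
  have hV0 : 0 ≤ V := Finset.sum_nonneg fun j _ => le_max_left 0 _
  set T : ℝ := max 1 V with hT
  have hT1 : (1:ℝ) ≤ T := le_max_left 1 V
  have hTpos : (0:ℝ) < T := lt_of_lt_of_le one_pos hT1
  set t : ℝ := 1 / T with htdef
  have ht0 : 0 < t := by positivity
  have ht1 : t ≤ 1 := by
    rw [htdef, div_le_one hTpos]
    exact hT1
  have htT : t * T = 1 := by
    rw [htdef]
    field_simp
  set yt : Fin n1 → ℝ := fun k => x.1 k + t * (y k - x.1 k) with hyt
  have hfeas : LLfeas A11 A12 Ab21 Ab22 b1 bb2 ub x.2.1 yt 1 := by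
    refine ⟨?_, ?_, zero_le_one, fun _ => le_refl 1⟩
    · intro j
      rw [hyt]
      rw [sum_mix]
      have h1 := hb1 j
      have h2 := hy j
      nlinarith [mul_nonneg ht0.le (by linarith : (0:ℝ) ≤
          (∑ k, (A11 j k : ℝ) * y k + ∑ k, (A12 j k : ℝ) * x.2.1 k) - (b1 j : ℝ)),
        mul_nonneg (by linarith : (0:ℝ) ≤ 1 - t) (by linarith : (0:ℝ) ≤
          (∑ k, (A11 j k : ℝ) * x.1 k + ∑ k, (A12 j k : ℝ) * x.2.1 k) - (b1 j : ℝ))]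
    · intro j
      rw [hyt]
      rw [sum_mix]
      have h1 : (bb2 j : ℝ) ≤ ∑ k, (Ab21 j k : ℝ) * x.1 k + ∑ k, (Ab22 j k : ℝ) * x.2.1 k := by
        have := hbb j
        simpa using this
      have hviol : (bb2 j : ℝ) - (∑ k, (Ab21 j k : ℝ) * y k + ∑ k, (Ab22 j k : ℝ) * x.2.1 k) ≤ V := by
        rw [hV]
        refine le_trans (le_max_right 0 _) ?_
        exact Finset.single_le_sum (f := fun j => max 0 ((bb2 j : ℝ) -
          (∑ k, (Ab21 j k : ℝ) * y k + ∑ k, (Ab22 j k : ℝ) * x.2.1 k)))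
          (fun i _ => le_max_left 0 _) (Finset.mem_univ j)
      have hVT : V ≤ T := le_max_right 1 V
      nlinarith [mul_nonneg (by linarith : (0:ℝ) ≤ 1 - t) (by linarith : (0:ℝ) ≤
          (∑ k, (Ab21 j k : ℝ) * x.1 k + ∑ k, (Ab22 j k : ℝ) * x.2.1 k) - (bb2 j : ℝ)),
        mul_le_mul_of_nonneg_left (le_trans hviol hVT) ht0.le]
  have := hopt yt 1 hfeas
  rw [hyt, sum_mix] at this
  nlinarith [this]


lemma exists_M1 (hconv : ∀ r : ℝ, ((r : WithTop ℝ) ≤ ebar ↔ (ub = true → r ≤ 1)))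
    (zhat : (Fin n1 → ℝ) × (Fin n2 → ℝ) × ℝ)
    (hzf : zhat ∈ FQ' m1 m2 m2' n1 n2 A11 A12 A21 A22 Ab21 Ab22 b1 b2 bb2 c11 ebar)
    (hze : zhat.2.2 = 0)
    (hQ' : ∀ M : ℝ, 0 < M →
      ∃ x ∈ FQ' m1 m2 m2' n1 n2 A11 A12 A21 A22 Ab21 Ab22 b1 b2 bb2 c11 ebar,
        ∀ y ∈ FQ' m1 m2 m2' n1 n2 A11 A12 A21 A22 Ab21 Ab22 b1 b2 bb2 c11 ebar,
          objQ' n1 n2 c21 c22 M x ≤ objQ' n1 n2 c21 c22 M y) :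
    ∃ M1 : ℝ, 0 < M1 ∧
      ∃ x ∈ FQ' m1 m2 m2' n1 n2 A11 A12 A21 A22 Ab21 Ab22 b1 b2 bb2 c11 ebar,
        (∀ y ∈ FQ' m1 m2 m2' n1 n2 A11 A12 A21 A22 Ab21 Ab22 b1 b2 bb2 c11 ebar,
          objQ' n1 n2 c21 c22 M1 x ≤ objQ' n1 n2 c21 c22 M1 y) ∧ x.2.2 = 0 := by
  classical
  set F' := FQ' m1 m2 m2' n1 n2 A11 A12 A21 A22 Ab21 Ab22 b1 b2 bb2 c11 ebar with hF'
  by_contra hno0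
  have hno : ∀ M : ℝ, 0 < M → ∀ x, x ∈ F' →
      (∀ y ∈ F', objQ' n1 n2 c21 c22 M x ≤ objQ' n1 n2 c21 c22 M y) → x.2.2 ≠ 0 := by
    intro M hM x hx hopt he
    exact hno0 ⟨M, hM, x, hx, hopt, he⟩
  obtain ⟨dR, hdR⟩ := projGen (κ := Fin n2 ⊕ Unit) (Fin n1 ⊕ Unit)
    (rowsD A11 A12 Ab21 Ab22 b1 bb2 c11 ub)
  set oR := dR.filter (fun p => decide (0 < p.1 (Sum.inr ()))) with hoR
  obtain ⟨CL, hCL1, hCL2⟩ := list_choice oR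
    (fun p r2 => ∀ z : (Unit ⊕ Unit) → ℝ, z ∈ sols r2 ↔
      ∃ y : (Fin n1 ⊕ Fin n2) → ℝ,
        Sum.elim z y ∈ sols (rowsT A11 A12 A21 A22 Ab21 Ab22 b1 b2 bb2 c11 c21 c22 ub p))
    (fun p _ => projGen (Fin n1 ⊕ Fin n2) _)
  have key2 : ∀ r2 ∈ CL, ∀ z ∈ sols r2, ∃ x' ∈ F',
      objQ n1 n2 c21 c22 (x'.1, x'.2.1) ≤ z (Sum.inl ()) ∧ x'.2.2 = z (Sum.inr ()) := by
    intro r2 hr2 z hz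
    obtain ⟨p, hpoR, hR⟩ := hCL1 r2 hr2
    have hpdR : p ∈ dR ∧ 0 < p.1 (Sum.inr ()) := by
      rw [hoR, List.mem_filter] at hpoR
      exact ⟨hpoR.1, by simpa using hpoR.2⟩
    obtain ⟨y, hy⟩ := (hR z).1 hz
    have hyeq : Sum.elim (ptC (z (Sum.inl ())) (z (Sum.inr ())))
        (Sum.elim (fun i => y (Sum.inl i)) (fun i => y (Sum.inr i))) = Sum.elim z y := by
      funext w
      rcases w with w | w
      · rcases w with ⟨⟩ | ⟨⟩ <;> rfl
      · rcases w with i | i <;> rfl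
    rw [← hyeq] at hy
    obtain ⟨hU, hL, htight, hobj⟩ :=
      (mem_rowsT A11 A12 A21 A22 Ab21 Ab22 b1 b2 bb2 c11 c21 c22 ub p _ _ _ _).1 hy
    refine ⟨((fun i => y (Sum.inl i)), (fun i => y (Sum.inr i)), z (Sum.inr ())), ?_, hobj, rfl⟩
    rw [hF', FQ'_iff A11 A12 A21 A22 Ab21 Ab22 b1 b2 bb2 c11 ub ebar hconv]
    refine ⟨hU, hL, ?_⟩
    exact (opt_char A11 A12 Ab21 Ab22 b1 bb2 c11 ub dR hdR _ _ _ hL).2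
      ⟨p, hpdR.1, hpdR.2, htight⟩
  have key1 : ∀ x ∈ F', ∃ r2 ∈ CL,
      ptC (objQ n1 n2 c21 c22 (x.1, x.2.1)) x.2.2 ∈ sols r2 := by
    intro x hx
    rw [hF', FQ'_iff A11 A12 A21 A22 Ab21 Ab22 b1 b2 bb2 c11 ub ebar hconv] at hx
    obtain ⟨hU, hL, hopt⟩ := hx
    obtain ⟨p, hpdR, hpT, htight⟩ :=
      (opt_char A11 A12 Ab21 Ab22 b1 bb2 c11 ub dR hdR _ _ _ hL).1 hopt
    have hpoR : p ∈ oR := by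
      rw [hoR, List.mem_filter]
      exact ⟨hpdR, by simpa using hpT⟩
    obtain ⟨r2, hr2, hR⟩ := hCL2 p hpoR
    refine ⟨r2, hr2, (hR _).2 ⟨Sum.elim x.1 x.2.1, ?_⟩⟩
    exact (mem_rowsT A11 A12 A21 A22 Ab21 Ab22 b1 b2 bb2 c11 c21 c22 ub p _ _ _ _).2
      ⟨hU, hL, htight, le_rfl⟩
  set allq := allR CL with hallq
  set Bset : Finset ℝ :=
    (allq.map (fun q => ((q.1 (Sum.inr ()) / q.1 (Sum.inl ()) : ℚ) : ℝ))).toFinset with hBset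
  have hgood : ∀ M : ℝ, M ∉ Bset → ∀ r2 ∈ CL, ∀ q ∈ r2,
      q.1 = 0 ∨ (q.1 (Sum.inl ()) : ℝ) * M ≠ (q.1 (Sum.inr ()) : ℝ) := by
    intro M hM r2 hr2 q hq
    by_cases hq0 : q.1 = 0
    · exact Or.inl hq0
    right
    intro heq
    rcases eq_or_ne (q.1 (Sum.inl ())) 0 with hα | hα
    · rw [hα] at heq
      have hβ : q.1 (Sum.inr ()) = 0 := by
        have : ((q.1 (Sum.inr ()) : ℚ) : ℝ) = 0 := by
          rw [← heq]; simp
        exact_mod_cast this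
      apply hq0
      funext w
      rcases w with ⟨⟩ | ⟨⟩
      · exact hα
      · exact hβ
    · apply hM
      rw [hBset, List.mem_toFinset, List.mem_map]
      refine ⟨q, mem_allR.2 ⟨r2, hr2, hq⟩, ?_⟩
      have hα' : ((q.1 (Sum.inl ()) : ℚ) : ℝ) ≠ 0 := by exact_mod_cast hα
      push_cast
      rw [div_eq_iff hα']
      linarith [heq]
  set EL : List ℚ := (allq.product allq).map (fun qr => eCram qr.1 qr.2) with hEL
  have heE : ∀ M : ℝ, M ∉ Bset → 0 < M → ∀ x ∈ F',
      (∀ y ∈ F', objQ' n1 n2 c21 c22 M x ≤ objQ' n1 n2 c21 c22 M y) →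
      ∃ a ∈ EL, x.2.2 = (a : ℝ) := by
    intro M hM hMpos x hx hopt
    obtain ⟨r2, hr2, hzmem⟩ := key1 x hx
    have hzmin : ∀ z' ∈ sols r2,
        obj2 M (ptC (objQ n1 n2 c21 c22 (x.1, x.2.1)) x.2.2) ≤ obj2 M z' := by
      intro z' hz'
      obtain ⟨x', hx', hobj', he'⟩ := key2 r2 hr2 z' hz'
      have hcmp := hopt x' hx'
      rw [objQ'_eq, objQ'_eq] at hcmp
      unfold obj2 ptC
      simp only [Sum.elim_inl, Sum.elim_inr]
      rw [he'] at hcmp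
      have hMz : M * (z' (Sum.inr ())) = M * (z' (Sum.inr ())) := rfl
      linarith [hcmp, hobj']
    have h2D := twoD r2 M (hgood M hM r2 hr2) _ hzmem hzmin
    obtain ⟨q, hq, r, hr, hdet, heq⟩ := h2D
    refine ⟨eCram q r, ?_, ?_⟩
    · rw [hEL, List.mem_map]
      exact ⟨(q, r), List.pair_mem_product.2
        ⟨mem_allR.2 ⟨r2, hr2, hq⟩, mem_allR.2 ⟨r2, hr2, hr⟩⟩, rfl⟩
    · simpa [ptC] using heq
  set εl := EL.filter (fun a => decide (0 < a)) with hεl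
  set ε : ℚ := εl.foldr min 1 with hε'
  have hε : 0 < ε := by
    apply foldr_min_pos
    intro a ha
    rw [hεl, List.mem_filter] at ha
    simpa using ha.2
  have hεle : ∀ a ∈ EL, 0 < a → ε ≤ a := by
    intro a ha hpos
    apply foldr_min_le
    rw [hεl, List.mem_filter]
    exact ⟨ha, by simpa using hpos⟩
  have hεR : (0:ℝ) < (ε : ℝ) := by exact_mod_cast hε
  obtain ⟨M0, hM0Ioi, hM0B⟩ :=
    Set.Infinite.exists_notMem_finset (Set.Ioi_infinite (0:ℝ)) Bset
  have hM0pos : (0:ℝ) < M0 := hM0Ioi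
  obtain ⟨x0, hx0, hopt0⟩ := hQ' M0 hM0pos
  set C := objQ' n1 n2 c21 c22 M0 x0 with hC
  set vb := objQ n1 n2 c21 c22 (zhat.1, zhat.2.1) with hvbdef
  have hvb : ∀ M : ℝ, objQ' n1 n2 c21 c22 M zhat = vb := by
    intro M
    rw [objQ'_eq, hze]
    ring
  obtain ⟨M', hM'Ioi, hM'B⟩ := Set.Infinite.exists_notMem_finset
    (Set.Ioi_infinite (max M0 ((vb - C) / (ε : ℝ) + M0 + 1))) Bset
  rw [Set.mem_Ioi] at hM'Ioi
  have hM'0 : M0 < M' := lt_of_le_of_lt (le_max_left _ _) hM'Ioi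
  have hM'pos : (0:ℝ) < M' := hM0pos.trans hM'0
  obtain ⟨x', hx', hopt'⟩ := hQ' M' hM'pos
  have hnn : 0 ≤ x'.2.2 := hx'.2.1.2.2.1
  have he' : (ε : ℝ) ≤ x'.2.2 := by
    obtain ⟨a, ha, haeq⟩ := heE M' hM'B hM'pos x' hx' hopt'
    have hne := hno M' hM'pos x' hx' hopt'
    have hxpos : 0 < x'.2.2 := lt_of_le_of_ne hnn (Ne.symm hne)
    have hapos : 0 < a := by
      have : (0:ℝ) < (a:ℝ) := haeq ▸ hxpos
      exact_mod_cast this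
    calc (ε:ℝ) ≤ (a:ℝ) := by exact_mod_cast hεle a ha hapos
    _ = x'.2.2 := haeq.symm
  have h1 : objQ' n1 n2 c21 c22 M' x' ≤ vb := by
    rw [← hvb M']
    exact hopt' zhat hzf
  have h2 : objQ' n1 n2 c21 c22 M' x' =
      objQ' n1 n2 c21 c22 M0 x' + (M' - M0) * x'.2.2 := by
    rw [objQ'_eq, objQ'_eq]
    ring
  have h3 : C ≤ objQ' n1 n2 c21 c22 M0 x' := hopt0 x' hx'
  have h4 : (M' - M0) * (ε : ℝ) ≤ (M' - M0) * x'.2.2 :=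
    mul_le_mul_of_nonneg_left he' (by linarith)
  have h5 : (vb - C) / (ε : ℝ) + M0 + 1 < M' := lt_of_le_of_lt (le_max_right _ _) hM'Ioi
  have h6 : vb - C < (M' - M0) * (ε : ℝ) := by
    have hd : ((vb - C) / (ε : ℝ)) * (ε : ℝ) = vb - C := div_mul_cancel₀ _ hεR.ne'
    nlinarith [mul_lt_mul_of_pos_right (show (vb - C) / (ε : ℝ) + 1 < M' - M0 by linarith) hεR]
  linarith

end Link
end BLP

/-- assuming `(Q)` has an optimal solution and `(Q'(M))` has an optimal
solution for every `M > 0`, there is `M0 > 0` such that for every `M ≥ M0`,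
`S(Q'(M)) = {(x1, x2, 0) : (x1, x2) ∈ S(Q)}`; in particular every optimal solution
`(x1, x2, e)` of `(Q'(M))` has `e = 0`. -/
theorem stmt3 (m1 m2 m2' n1 n2 : ℕ)
    (A11 : Matrix (Fin m1) (Fin n1) ℚ) (A12 : Matrix (Fin m1) (Fin n2) ℚ)
    (A21 : Matrix (Fin m2) (Fin n1) ℚ) (A22 : Matrix (Fin m2) (Fin n2) ℚ)
    (Ab21 : Matrix (Fin m2') (Fin n1) ℚ) (Ab22 : Matrix (Fin m2') (Fin n2) ℚ)
    (b1 : Fin m1 → ℚ) (b2 : Fin m2 → ℚ) (bb2 : Fin m2' → ℚ)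
    (c11 c21 : Fin n1 → ℚ) (c22 : Fin n2 → ℚ)
    (ebar : WithTop ℝ) (hebar : ebar = 1 ∨ ebar = ⊤)
    (hQ : ∃ x ∈ FQ m1 m2 m2' n1 n2 A11 A12 A21 A22 Ab21 Ab22 b1 b2 bb2 c11,
      ∀ y ∈ FQ m1 m2 m2' n1 n2 A11 A12 A21 A22 Ab21 Ab22 b1 b2 bb2 c11,
        objQ n1 n2 c21 c22 x ≤ objQ n1 n2 c21 c22 y)
    (hQ' : ∀ M : ℝ, 0 < M →
      ∃ x ∈ FQ' m1 m2 m2' n1 n2 A11 A12 A21 A22 Ab21 Ab22 b1 b2 bb2 c11 ebar,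
        ∀ y ∈ FQ' m1 m2 m2' n1 n2 A11 A12 A21 A22 Ab21 Ab22 b1 b2 bb2 c11 ebar,
          objQ' n1 n2 c21 c22 M x ≤ objQ' n1 n2 c21 c22 M y) :
    ∃ M0 : ℝ, 0 < M0 ∧ ∀ M : ℝ, M0 ≤ M →
      {x ∈ FQ' m1 m2 m2' n1 n2 A11 A12 A21 A22 Ab21 Ab22 b1 b2 bb2 c11 ebar |
        ∀ y ∈ FQ' m1 m2 m2' n1 n2 A11 A12 A21 A22 Ab21 Ab22 b1 b2 bb2 c11 ebar,
          objQ' n1 n2 c21 c22 M x ≤ objQ' n1 n2 c21 c22 M y} =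
      {x : (Fin n1 → ℝ) × (Fin n2 → ℝ) × ℝ | x.2.2 = 0 ∧
        (x.1, x.2.1) ∈ {z ∈ FQ m1 m2 m2' n1 n2 A11 A12 A21 A22 Ab21 Ab22 b1 b2 bb2 c11 |
          ∀ y ∈ FQ m1 m2 m2' n1 n2 A11 A12 A21 A22 Ab21 Ab22 b1 b2 bb2 c11,
            objQ n1 n2 c21 c22 z ≤ objQ n1 n2 c21 c22 y}} := by
  classical
  obtain ⟨ub, hconv⟩ : ∃ ub : Bool,
      ∀ r : ℝ, ((r : WithTop ℝ) ≤ ebar ↔ (ub = true → r ≤ 1)) := by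
    rcases hebar with rfl | rfl
    · refine ⟨true, fun r => ?_⟩
      rw [show ((1 : WithTop ℝ)) = ((1:ℝ) : WithTop ℝ) from rfl, WithTop.coe_le_coe]
      simp
    · exact ⟨false, fun r => by simp⟩
  obtain ⟨zQ, hzQ, hzQopt⟩ := hQ
  have hzf := BLP.sec_fwd A11 A12 A21 A22 Ab21 Ab22 b1 b2 bb2 c11 ub ebar hconv zQ hzQ
  obtain ⟨M1, hM1pos, x0, hx0f, hx0opt, hx0e⟩ :=
    BLP.exists_M1 A11 A12 A21 A22 Ab21 Ab22 b1 b2 bb2 c11 c21 c22 ub ebar hconv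
      (zQ.1, zQ.2, (0:ℝ)) hzf rfl hQ'
  refine ⟨M1 + 1, by linarith, ?_⟩
  intro M hM
  have hM1M : M1 < M := by linarith
  have hMpos : (0:ℝ) < M := by linarith
  have hx0optM : ∀ y ∈ FQ' m1 m2 m2' n1 n2 A11 A12 A21 A22 Ab21 Ab22 b1 b2 bb2 c11 ebar,
      objQ' n1 n2 c21 c22 M x0 ≤ objQ' n1 n2 c21 c22 M y := by
    intro y hy
    have h01 := hx0opt y hy
    have hynn : 0 ≤ y.2.2 := hy.2.1.2.2.1
    rw [BLP.objQ'_eq, BLP.objQ'_eq] at h01 ⊢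
    rw [hx0e] at h01 ⊢
    nlinarith
  ext x
  simp only [Set.mem_setOf_eq, Set.mem_sep_iff]
  constructor
  · rintro ⟨hxf, hxopt⟩
    have hxnn : 0 ≤ x.2.2 := hxf.2.1.2.2.1
    have he : x.2.2 = 0 := by
      have ha := hxopt x0 hx0f
      have hb := hx0opt x hxf
      rw [BLP.objQ'_eq, BLP.objQ'_eq] at ha hb
      rw [hx0e] at ha hb
      nlinarith
    refine ⟨he, BLP.sec_bwd A11 A12 A21 A22 Ab21 Ab22 b1 b2 bb2 c11 ub ebar hconv x hxf he, ?_⟩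
    intro y hy
    have hyf := BLP.sec_fwd A11 A12 A21 A22 Ab21 Ab22 b1 b2 bb2 c11 ub ebar hconv y hy
    have hcmp := hxopt (y.1, y.2, (0:ℝ)) hyf
    rw [BLP.objQ'_eq, BLP.objQ'_eq] at hcmp
    rw [he] at hcmp
    simpa using hcmp
  · rintro ⟨he, hzF, hzOpt⟩
    have hxeq : (x.1, x.2.1, (0:ℝ)) = x := by
      rw [← he]
    have hxf : x ∈ FQ' m1 m2 m2' n1 n2 A11 A12 A21 A22 Ab21 Ab22 b1 b2 bb2 c11 ebar := by
      rw [← hxeq]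
      exact BLP.sec_fwd A11 A12 A21 A22 Ab21 Ab22 b1 b2 bb2 c11 ub ebar hconv (x.1, x.2.1) hzF
    refine ⟨hxf, ?_⟩
    intro y hy
    have h1 := hx0optM y hy
    have hx0Q := BLP.sec_bwd A11 A12 A21 A22 Ab21 Ab22 b1 b2 bb2 c11 ub ebar hconv x0 hx0f hx0e
    have h2 := hzOpt (x0.1, x0.2.1) hx0Q
    rw [BLP.objQ'_eq, BLP.objQ'_eq] at h1 ⊢
    rw [hx0e] at h1
    rw [he]
    linarith
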